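/- arXiv:1202.2385 — 10 statements merged into one kernel-verified Lean document; each statement's English description precedes it below -/
import Mathlib

section
/- If H and K are subgroups of a finite group G, then m_G(H) · m_G(K) ≤ m_G(⟨H, K⟩) · m_G(H ∩ K). -/
/-!
Since `|K : H ∩ K| ≤ |⟨H, K⟩ : H|`, one has `|H| |K| ≤ |⟨H, K⟩| |H ∩ K|`. Applied to `C_G(H)` and
`C_G(K)`, whose intersection is `C_G(⟨H, K⟩)` and whose join lies in `C_G(H ∩ K)`, the same
inequality holds for the centralizers; multiplying the two gives the theorem.
-/

/-- The Chermak-Delgado measure of a subgroup `H` of `G`: `|H| * |C_G(H)|`. -/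
noncomputable def cdMeasure {G : Type*} [Group G] (H : Subgroup G) : ℕ :=
  Nat.card H * Nat.card (Subgroup.centralizer (H : Set G))

/-- The Chermak-Delgado lattice: subgroups of maximal Chermak-Delgado measure. -/
def CD (G : Type*) [Group G] : Set (Subgroup G) :=
  {H : Subgroup G | ∀ K : Subgroup G, cdMeasure K ≤ cdMeasure H}

namespace Subgroup

variable {G : Type*} [Group G]

theorem card_inf_mul_relIndex (H K : Subgroup G) :
    Nat.card ↥(H ⊓ K) * H.relIndex K = Nat.card K := by
  rw [← relIndex_bot_left (H ⊓ K), ← inf_relIndex_right H K,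
    relIndex_mul_relIndex _ _ _ bot_le inf_le_right, relIndex_bot_left]

theorem card_mul_card_le_card_sup_mul_card_inf [Finite G] (H K : Subgroup G) :
    Nat.card H * Nat.card K ≤ Nat.card ↥(H ⊔ K) * Nat.card ↥(H ⊓ K) := by
  have hK := card_inf_mul_relIndex H K
  have hHK := card_inf_mul_relIndex H (H ⊔ K)
  rw [inf_of_le_left le_sup_left] at hHK
  have hle : H.relIndex K ≤ H.relIndex (H ⊔ K) :=
    relIndex_le_of_le_right le_sup_right FiniteIndex.index_ne_zero
  rw [← hK, ← hHK]
  calc Nat.card H * (Nat.card ↥(H ⊓ K) * H.relIndex K)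
      ≤ Nat.card H * (Nat.card ↥(H ⊓ K) * H.relIndex (H ⊔ K)) := by gcongr
    _ = Nat.card H * H.relIndex (H ⊔ K) * Nat.card ↥(H ⊓ K) := by ring

theorem centralizer_sup (H K : Subgroup G) :
    centralizer ((H ⊔ K : Subgroup G) : Set G) = centralizer H ⊓ centralizer K := by
  rw [sup_eq_closure, centralizer_closure]
  exact SetLike.coe_injective Set.centralizer_union

theorem centralizer_sup_centralizer_le_centralizer_inf (H K : Subgroup G) :
    centralizer (H : Set G) ⊔ centralizer K ≤ centralizer ((H ⊓ K : Subgroup G) : Set G) :=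
  sup_le (centralizer_le inf_le_left) (centralizer_le inf_le_right)

theorem card_centralizer_mul_card_centralizer_le [Finite G] (H K : Subgroup G) :
    Nat.card (centralizer (H : Set G)) * Nat.card (centralizer (K : Set G)) ≤
      Nat.card (centralizer ((H ⊔ K : Subgroup G) : Set G)) *
        Nat.card (centralizer ((H ⊓ K : Subgroup G) : Set G)) := by
  rw [centralizer_sup, mul_comm (Nat.card ↥(centralizer (H : Set G) ⊓ _))]
  exact (card_mul_card_le_card_sup_mul_card_inf _ _).trans
    (Nat.mul_le_mul_right _ (card_le_of_le (centralizer_sup_centralizer_le_centralizer_inf H K)))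

end Subgroup

open Subgroup in
theorem stmt_1 {G : Type*} [Group G] [Finite G] (H K : Subgroup G) :
    cdMeasure H * cdMeasure K ≤ cdMeasure (H ⊔ K) * cdMeasure (H ⊓ K) := by
  calc cdMeasure H * cdMeasure K
      = (Nat.card H * Nat.card K) *
          (Nat.card (centralizer (H : Set G)) * Nat.card (centralizer (K : Set G))) := by
        unfold cdMeasure; ring
    _ ≤ (Nat.card ↥(H ⊔ K) * Nat.card ↥(H ⊓ K)) *
          (Nat.card (centralizer ((H ⊔ K : Subgroup G) : Set G)) *
            Nat.card (centralizer ((H ⊓ K : Subgroup G) : Set G))) :=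
        Nat.mul_le_mul (card_mul_card_le_card_sup_mul_card_inf H K)
          (card_centralizer_mul_card_centralizer_le H K)
    _ = cdMeasure (H ⊔ K) * cdMeasure (H ⊓ K) := by
        unfold cdMeasure; ring
end

section
/- If H and K are subgroups of a finite group G with m_G(H)·m_G(K) = m_G(⟨H,K⟩)·m_G(H ∩ K), then ⟨H, K⟩ = HK (as sets) and C_G(H ∩ K) = C_G(H)·C_G(K). -/
open scoped Pointwise

lemma prod_formula {G : Type*} [Group G] (H K : Subgroup G) :
    Nat.card ((H : Set G) * (K : Set G)) * Nat.card (H ⊓ K : Subgroup G)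
      = Nat.card H * Nat.card K := by
  have spec : ∀ x : ((H : Set G) * (K : Set G)),
      ∃ p : G × G, p.1 ∈ H ∧ p.2 ∈ K ∧ p.1 * p.2 = (x : G) := by
    rintro ⟨x, hx⟩
    obtain ⟨a, ha, b, hb, hab⟩ := hx
    exact ⟨(a, b), ha, hb, hab⟩
  choose r hr1 hr2 hr3 using spec
  have memH : ∀ p : H × K, ((p.1 : G) * (p.2 : G)) ∈ (H : Set G) * (K : Set G) :=
    fun p => Set.mul_mem_mul p.1.2 p.2.2
  have memHK : ∀ p : H × K,
      (r ⟨(p.1 : G) * (p.2 : G), memH p⟩).1⁻¹ * (p.1 : G) ∈ H ⊓ K := by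
    intro p
    set x : ((H : Set G) * (K : Set G)) := ⟨(p.1 : G) * (p.2 : G), memH p⟩ with hx
    refine ⟨H.mul_mem (H.inv_mem (hr1 x)) p.1.2, ?_⟩
    have h3 := hr3 x
    have : (r x).1⁻¹ * (p.1 : G) = (r x).2 * (p.2 : G)⁻¹ := by
      rw [inv_mul_eq_iff_eq_mul, ← mul_assoc, h3]
      simp [hx, mul_assoc]
    rw [this]
    exact K.mul_mem (hr2 x) (K.inv_mem p.2.2)
  set f : H × K → (((H : Set G) * (K : Set G)) × (H ⊓ K : Subgroup G)) :=
    fun p => (⟨(p.1 : G) * (p.2 : G), memH p⟩,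
      ⟨(r ⟨(p.1 : G) * (p.2 : G), memH p⟩).1⁻¹ * (p.1 : G), memHK p⟩) with hf
  have hbij : Function.Bijective f := by
    constructor
    · rintro ⟨a, b⟩ ⟨c, d⟩ hEq
      obtain ⟨h1, h2⟩ := Prod.mk.injEq .. ▸ hEq
      have hval : (a : G) * (b : G) = (c : G) * (d : G) := congrArg Subtype.val h1
      have hx : (⟨(a : G) * (b : G), memH (a, b)⟩ : ((H : Set G) * (K : Set G)))
          = ⟨(c : G) * (d : G), memH (c, d)⟩ := Subtype.ext hval
      have h2' : (r ⟨(a : G) * (b : G), memH (a, b)⟩).1⁻¹ * (a : G)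
          = (r ⟨(c : G) * (d : G), memH (c, d)⟩).1⁻¹ * (c : G) :=
        congrArg Subtype.val h2
      rw [hx] at h2'
      have ha : (a : G) = (c : G) := mul_left_cancel h2'
      have hb : (b : G) = (d : G) := by
        have := hval; rw [ha] at this; exact mul_left_cancel this
      exact Prod.ext (Subtype.ext ha) (Subtype.ext hb)
    · rintro ⟨x, d⟩
      refine ⟨(⟨(r x).1 * (d : G), H.mul_mem (hr1 x) d.2.1⟩,
        ⟨(d : G)⁻¹ * (r x).2, K.mul_mem (K.inv_mem d.2.2) (hr2 x)⟩), ?_⟩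
      have hval : ((r x).1 * (d : G)) * ((d : G)⁻¹ * (r x).2) = (x : G) := by
        rw [mul_assoc, ← mul_assoc (d : G), mul_inv_cancel, one_mul, hr3 x]
      have hx : (⟨((r x).1 * (d : G)) * ((d : G)⁻¹ * (r x).2),
          memH (⟨(r x).1 * (d : G), H.mul_mem (hr1 x) d.2.1⟩,
            ⟨(d : G)⁻¹ * (r x).2, K.mul_mem (K.inv_mem d.2.2) (hr2 x)⟩)⟩ :
          ((H : Set G) * (K : Set G))) = x := Subtype.ext hval
      simp only [hf]
      refine Prod.ext ?_ ?_
      · exact hx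
      · refine Subtype.ext ?_
        simp only []
        rw [hx, ← mul_assoc, inv_mul_cancel, one_mul]
  calc Nat.card ((H : Set G) * (K : Set G)) * Nat.card (H ⊓ K : Subgroup G)
      = Nat.card (((H : Set G) * (K : Set G)) × (H ⊓ K : Subgroup G)) := (Nat.card_prod _ _).symm
    _ = Nat.card (H × K) := (Nat.card_congr (Equiv.ofBijective f hbij)).symm
    _ = Nat.card H * Nat.card K := Nat.card_prod _ _

lemma centralizer_sup {G : Type*} [Group G] (H K : Subgroup G) :
    Subgroup.centralizer ((H ⊔ K : Subgroup G) : Set G)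
      = Subgroup.centralizer (H : Set G) ⊓ Subgroup.centralizer (K : Set G) := by
  refine le_antisymm (le_inf (Subgroup.centralizer_le ?_) (Subgroup.centralizer_le ?_)) ?_
  · exact SetLike.coe_subset_coe.mpr le_sup_left
  · exact SetLike.coe_subset_coe.mpr le_sup_right
  · intro x hx
    rw [Subgroup.mem_centralizer_iff]
    intro g hg
    have hle : H ⊔ K ≤ Subgroup.centralizer {x} := by
      refine sup_le ?_ ?_ <;> intro y hy <;> rw [Subgroup.mem_centralizer_iff] <;>
        rintro z rfl
      · exact (hx.1 y hy).symm
      · exact (hx.2 y hy).symm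
    exact (hle hg x rfl).symm

lemma centralizer_mul_subset {G : Type*} [Group G] (H K : Subgroup G) :
    (Subgroup.centralizer (H : Set G) : Set G) * (Subgroup.centralizer (K : Set G) : Set G)
      ⊆ (Subgroup.centralizer ((H ⊓ K : Subgroup G) : Set G) : Set G) := by
  rintro _ ⟨a, ha, b, hb, rfl⟩
  rw [SetLike.mem_coe, Subgroup.mem_centralizer_iff]
  intro g hg
  have h1 : g * a = a * g := ha g hg.1
  have h2 : g * b = b * g := hb g hg.2
  calc g * (a * b) = (g * a) * b := by rw [mul_assoc]
    _ = a * (g * b) := by rw [h1, mul_assoc]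
    _ = a * b * g := by rw [h2, mul_assoc]

theorem stmt_2 {G : Type*} [Group G] [Finite G] (H K : Subgroup G)
    (h : cdMeasure H * cdMeasure K = cdMeasure (H ⊔ K) * cdMeasure (H ⊓ K)) :
    ((H ⊔ K : Subgroup G) : Set G) = (H : Set G) * (K : Set G) ∧
    (Subgroup.centralizer ((H ⊓ K : Subgroup G) : Set G) : Set G) =
      (Subgroup.centralizer (H : Set G) : Set G) *
        (Subgroup.centralizer (K : Set G) : Set G) := by
  classical
  set CH := Subgroup.centralizer (H : Set G)
  set CK := Subgroup.centralizer (K : Set G)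
  set a := Nat.card ((H : Set G) * (K : Set G)) with ha_def
  set i := Nat.card (H ⊓ K : Subgroup G)
  set b := Nat.card (H ⊔ K : Subgroup G)
  set c := Nat.card ((CH : Set G) * (CK : Set G)) with hc_def
  set j := Nat.card (CH ⊓ CK : Subgroup G)
  set dd := Nat.card (Subgroup.centralizer ((H ⊓ K : Subgroup G) : Set G))
  have pf1 : a * i = Nat.card H * Nat.card K := prod_formula H K
  have pf2 : c * j = Nat.card CH * Nat.card CK := prod_formula CH CK
  have hj : Nat.card (Subgroup.centralizer ((H ⊔ K : Subgroup G) : Set G)) = j := by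
    rw [centralizer_sup H K]
  have hmain : (a * i) * (c * j) = (b * j) * (i * dd) := by
    rw [pf1, pf2]
    have := h
    unfold cdMeasure at this
    rw [hj] at this
    calc Nat.card H * Nat.card K * (Nat.card CH * Nat.card CK)
        = Nat.card H * Nat.card CH * (Nat.card K * Nat.card CK) := by ring
      _ = b * j * (i * dd) := this
  have hipos : 0 < i := Nat.card_pos
  have hjpos : 0 < j := Nat.card_pos
  have hbpos : 0 < b := Nat.card_pos
  have hapos : 0 < a := by
    haveI : Nonempty ((H : Set G) * (K : Set G) : Set G) :=
      ⟨⟨1, by simpa using Set.mul_mem_mul H.one_mem K.one_mem⟩⟩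
    exact Nat.card_pos
  have hcpos : 0 < c := by
    haveI : Nonempty ((CH : Set G) * (CK : Set G) : Set G) :=
      ⟨⟨1, by simpa using Set.mul_mem_mul CH.one_mem CK.one_mem⟩⟩
    exact Nat.card_pos
  -- a*c = b*dd
  have hac : a * c = b * dd := by
    have : (a * c) * (i * j) = (b * dd) * (i * j) := by
      calc (a * c) * (i * j) = (a * i) * (c * j) := by ring
        _ = (b * j) * (i * dd) := hmain
        _ = (b * dd) * (i * j) := by ring
    exact Nat.eq_of_mul_eq_mul_right (Nat.mul_pos hipos hjpos) this
  -- subset relations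
  have hsub1 : (H : Set G) * (K : Set G) ⊆ ((H ⊔ K : Subgroup G) : Set G) := by
    rintro _ ⟨x, hx, y, hy, rfl⟩
    exact Subgroup.mul_mem_sup hx hy
  have hsub2 := centralizer_mul_subset H K
  have hale : a ≤ b := by
    rw [ha_def, Nat.card_coe_set_eq]
    calc ((H : Set G) * (K : Set G)).ncard ≤ ((H ⊔ K : Subgroup G) : Set G).ncard :=
          Set.ncard_le_ncard hsub1 (Set.toFinite _)
      _ = b := by rw [← Nat.card_coe_set_eq]; rfl
  have hcle : c ≤ dd := by
    rw [hc_def, Nat.card_coe_set_eq]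
    calc ((CH : Set G) * (CK : Set G)).ncard
        ≤ ((Subgroup.centralizer ((H ⊓ K : Subgroup G) : Set G) : Subgroup G) : Set G).ncard :=
          Set.ncard_le_ncard hsub2 (Set.toFinite _)
      _ = dd := by rw [← Nat.card_coe_set_eq]; rfl
  have hab : a = b := by
    refine Nat.le_antisymm hale ?_
    have : b * c ≤ a * c := hac ▸ Nat.mul_le_mul_left b hcle |>.trans_eq rfl |> fun _ => by
      calc b * c ≤ b * dd := Nat.mul_le_mul_left b hcle
        _ = a * c := hac.symm
    exact Nat.le_of_mul_le_mul_right this hcpos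
  have hcd : c = dd := by
    refine Nat.le_antisymm hcle ?_
    have : a * dd ≤ a * c := by
      calc a * dd ≤ b * dd := Nat.mul_le_mul_right dd hale
        _ = a * c := hac.symm
    exact Nat.le_of_mul_le_mul_left this hapos
  constructor
  · refine (Set.eq_of_subset_of_ncard_le hsub1 ?_ (Set.toFinite _)).symm
    rw [← Nat.card_coe_set_eq, ← Nat.card_coe_set_eq]
    exact le_of_eq (show b = a from hab.symm)
  · refine (Set.eq_of_subset_of_ncard_le hsub2 ?_ (Set.toFinite _)).symm
    rw [← Nat.card_coe_set_eq, ← Nat.card_coe_set_eq]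
    exact le_of_eq (show dd = c from hcd.symm)
end

section
/- If H is a subgroup of a finite group G achieving the maximal Chermak-Delgado measure, then C_G(H) also achieves the maximal Chermak-Delgado measure, and H = C_G(C_G(H)). -/
namespace Subgroup

variable {G : Type*} [Group G]

theorem le_centralizer_centralizer (H : Subgroup G) :
    H ≤ centralizer (centralizer (H : Set G) : Set G) :=
  le_centralizer_iff.mpr le_rfl

theorem cdMeasure_centralizer (H : Subgroup G) :
    cdMeasure (centralizer (H : Set G)) =
      Nat.card (centralizer (H : Set G)) *
        Nat.card (centralizer (centralizer (H : Set G) : Set G)) :=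
  rfl

theorem cdMeasure_le_cdMeasure_centralizer [Finite G] (H : Subgroup G) :
    cdMeasure H ≤ cdMeasure (centralizer (H : Set G)) := by
  rw [cdMeasure_centralizer, cdMeasure, mul_comm]
  exact Nat.mul_le_mul_left _ (card_le_of_le H.le_centralizer_centralizer)

end Subgroup

open Subgroup in
theorem stmt_4 {G : Type*} [Group G] [Finite G] (H : Subgroup G) (hH : H ∈ CD G) :
    Subgroup.centralizer (H : Set G) ∈ CD G ∧
    H = Subgroup.centralizer ((Subgroup.centralizer (H : Set G) : Subgroup G) : Set G) := by
  have hmeasure : cdMeasure (centralizer (H : Set G)) = cdMeasure H :=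
    (hH _).antisymm H.cdMeasure_le_cdMeasure_centralizer
  refine ⟨fun K => hmeasure ▸ hH K, eq_of_le_of_card_ge H.le_centralizer_centralizer ?_⟩
  have hcard : Nat.card (centralizer (H : Set G)) *
      Nat.card (centralizer (centralizer (H : Set G) : Set G)) =
      Nat.card (centralizer (H : Set G)) * Nat.card H := by
    rw [← cdMeasure_centralizer, hmeasure, cdMeasure, mul_comm]
  exact (Nat.eq_of_mul_eq_mul_left Nat.card_pos hcard).le
end

section
/- The Chermak-Delgado lattice of the symmetric group S₄ is {1, S₄}. -/
namespace CDS4Aux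

open Subgroup

abbrev G4 := Equiv.Perm (Fin 4)

def cc (x : G4) : ℕ := (Finset.univ.filter fun y => x*y = y*x).card
def cc2 (x y : G4) : ℕ := (Finset.univ.filter fun z => x*z = z*x ∧ y*z = z*y).card

lemma factA : ∀ x : G4, x ≠ 1 → cc x ≤ 8 := by decide
lemma factB : ∀ x : G4, x^3 = 1 → x ≠ 1 → cc x = 3 := by decide
lemma factD : ∀ x : G4, cc x = 8 →
    ¬ (∀ a b : G4, x*a = a*x → x*b = b*x → a*b = b*a) := by decide
lemma factE : ∀ x y : G4, x^3 = 1 → x ≠ 1 → y*y = 1 → y ≠ 1 → x*y ≠ y*x := by decide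
lemma factF : ∀ x : G4, x ≠ 1 → cc x ≤ 4 ∨ cc x = 8 := by decide
lemma factG : ∀ x y : G4, x ≠ 1 → y ≠ 1 → x ≠ y → cc x = 8 → cc y = 8 →
    cc2 x y = 4 := by decide
lemma factZ : ∀ x : G4, (∀ y, y*x = x*y) → x = 1 := by decide

lemma ccEq (x : G4) : Nat.card (Subgroup.centralizer ({x} : Set G4)) = cc x := by
  have : Nat.card (Subgroup.centralizer ({x} : Set G4)) = Nat.card {y : G4 // x*y = y*x} := by
    apply Nat.card_congr
    apply Equiv.subtypeEquivRight
    intro y; simp [Subgroup.mem_centralizer_iff]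
  rw [this, Nat.card_eq_fintype_card, Fintype.card_subtype, cc]

lemma ccEq2 (x y : G4) : Nat.card (Subgroup.centralizer ({x, y} : Set G4)) = cc2 x y := by
  have : Nat.card (Subgroup.centralizer ({x, y} : Set G4))
      = Nat.card {z : G4 // x*z = z*x ∧ y*z = z*y} := by
    apply Nat.card_congr
    apply Equiv.subtypeEquivRight
    intro z; simp [Subgroup.mem_centralizer_iff]
  rw [this, Nat.card_eq_fintype_card, Fintype.card_subtype, cc2]

lemma cardG4 : Nat.card G4 = 24 := by
  rw [Nat.card_eq_fintype_card, Fintype.card_perm]; rfl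

lemma centerG4 : Subgroup.center G4 = ⊥ := by
  ext x
  simp only [Subgroup.mem_center_iff, Subgroup.mem_bot]
  exact ⟨factZ x, by rintro rfl; simp⟩

/-- Centralizer bound via one element. -/
lemma cent_le_cc {K : Subgroup G4} {x : G4} (hx : x ∈ K) :
    Nat.card (Subgroup.centralizer (K : Set G4)) ≤ cc x := by
  rw [← ccEq]
  exact Subgroup.card_le_of_le (Subgroup.centralizer_le (Set.singleton_subset_iff.mpr hx))

lemma cent_le_cc2 {K : Subgroup G4} {x y : G4} (hx : x ∈ K) (hy : y ∈ K) :
    Nat.card (Subgroup.centralizer (K : Set G4)) ≤ cc2 x y := by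
  rw [← ccEq2]
  refine Subgroup.card_le_of_le (Subgroup.centralizer_le ?_)
  intro z hz
  rcases hz with rfl | hz
  · exact hx
  · exact Set.mem_singleton_iff.mp hz ▸ hy

/-- Cauchy, pushed to `G4`. -/
lemma exists_ord {K : Subgroup G4} (p : ℕ) [hp : Fact p.Prime]
    (hd : p ∣ Nat.card K) : ∃ x ∈ K, x ^ p = 1 ∧ x ≠ 1 := by
  haveI : Fintype ↥K := Fintype.ofFinite ↥K
  rw [Nat.card_eq_fintype_card] at hd
  obtain ⟨x, hx⟩ := exists_prime_orderOf_dvd_card p hd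
  have hco : orderOf (x : G4) = p := by rw [Subgroup.orderOf_coe, hx]
  refine ⟨(x : G4), x.2, ?_, ?_⟩
  · rw [← hco]; exact pow_orderOf_eq_one _
  · intro h
    have : orderOf (x : G4) = 1 := by rw [h, orderOf_one]
    rw [hco] at this
    exact hp.out.one_lt.ne' this

lemma m2 {K : Subgroup G4} (h : Nat.card K = 2) : cdMeasure K < 24 := by
  obtain ⟨x, hxK, _, hx1⟩ := exists_ord 2 (by rw [h])
  have := le_trans (cent_le_cc hxK) (factA x hx1)
  unfold cdMeasure; rw [h]; omega

lemma m3 {K : Subgroup G4} (h : Nat.card K = 3) : cdMeasure K < 24 := by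
  obtain ⟨x, hxK, hx3, hx1⟩ := exists_ord 3 (by rw [h])
  have := le_trans (cent_le_cc hxK) (le_of_eq (factB x hx3 hx1))
  unfold cdMeasure; rw [h]; omega

lemma m4 {K : Subgroup G4} (h : Nat.card K = 4) : cdMeasure K ≤ 16 := by
  obtain ⟨x, hxK, _, hx1⟩ := exists_ord 2 (by rw [h]; norm_num)
  rcases factF x hx1 with hcx | hcx
  · have := le_trans (cent_le_cc hxK) hcx
    unfold cdMeasure; rw [h]; omega
  · -- x has centralizer of order 8; find a second element of K outside ⟨x⟩
    have hnot : ¬ K ≤ Subgroup.zpowers x := by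
      intro hle
      have hc := Subgroup.card_le_of_le hle
      rw [h, Nat.card_zpowers] at hc
      have h2 : orderOf x ≤ 2 := Nat.le_of_dvd (by norm_num)
        (orderOf_dvd_of_pow_eq_one (by assumption))
      omega
    rw [SetLike.le_def] at hnot
    push_neg at hnot
    obtain ⟨y, hyK, hy⟩ := hnot
    have hy1 : y ≠ 1 := fun hh => hy (hh ▸ Subgroup.one_mem _)
    have hyx : y ≠ x := fun hh => hy (hh ▸ Subgroup.mem_zpowers x)
    rcases factF y hy1 with hcy | hcy
    · have := le_trans (cent_le_cc hyK) hcy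
      unfold cdMeasure; rw [h]; omega
    · have h4 : cc2 x y = 4 := factG x y hx1 hy1 (Ne.symm hyx) hcx hcy
      have := le_trans (cent_le_cc2 hxK hyK) (le_of_eq h4)
      unfold cdMeasure; rw [h]; omega

lemma m6 {K : Subgroup G4} (h : Nat.card K = 6) : cdMeasure K < 24 := by
  obtain ⟨x, hxK, hx3, hx1⟩ := exists_ord 3 (by rw [h]; norm_num)
  have := le_trans (cent_le_cc hxK) (le_of_eq (factB x hx3 hx1))
  unfold cdMeasure; rw [h]; omega

lemma m8 {K : Subgroup G4} (h : Nat.card K = 8) : cdMeasure K < 24 := by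
  set C := Subgroup.centralizer (K : Set G4) with hC
  -- Step 1: C ≤ K
  have hCle : C ≤ K := by
    intro c hc
    by_contra hcK
    set L := K ⊔ Subgroup.zpowers c with hL
    have hKL : K ≤ L := le_sup_left
    have hcL : c ∈ L := (le_sup_right : Subgroup.zpowers c ≤ L) (Subgroup.mem_zpowers c)
    have h8 : 8 ∣ Nat.card L := h ▸ Subgroup.card_dvd_of_le hKL
    have hL24 : Nat.card L ∣ 24 := cardG4 ▸ Subgroup.card_subgroup_dvd_card L
    obtain ⟨m, hm⟩ := h8
    have hm3 : m ∣ 3 := by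
      have : 8 * m ∣ 8 * 3 := by rw [← hm]; exact hL24
      exact (mul_dvd_mul_iff_left (by norm_num : (8:ℕ) ≠ 0)).mp this
    rcases (Nat.prime_three.eq_one_or_self_of_dvd m hm3) with rfl | rfl
    · -- |L| = 8, so L = K and c ∈ K, contradiction
      have : K = L := Subgroup.eq_of_le_of_card_ge hKL (by rw [h, hm])
      exact hcK (this ▸ hcL)
    · -- |L| = 24, so L = ⊤ and c is central
      have hLtop : L = ⊤ := Subgroup.eq_top_of_card_eq L (by rw [hm, cardG4])
      have hLcent : L ≤ Subgroup.centralizer ({c} : Set G4) := by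
        rw [hL, sup_le_iff]
        constructor
        · intro k hk
          rw [Subgroup.mem_centralizer_iff]
          rintro z rfl
          exact (Subgroup.mem_centralizer_iff.mp hc k hk).symm
        · rw [Subgroup.zpowers_le]
          rw [Subgroup.mem_centralizer_iff]
          rintro z rfl
          rfl
      have hall : ∀ g : G4, g * c = c * g := by
        intro g
        have hg : g ∈ L := by rw [hLtop]; trivial
        exact (Subgroup.mem_centralizer_iff.mp (hLcent hg) c rfl).symm
      have : c = 1 := factZ c (fun y => hall y)
      exact hcK (this ▸ K.one_mem)
  have hCdvd : Nat.card C ∣ 8 := h ▸ Subgroup.card_dvd_of_le hCle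
  -- Step 2: rule out |C| ∈ {4, 8}
  have hC4 : Nat.card C ≠ 4 := by
    intro h4
    have hm4 := m4 h4
    unfold cdMeasure at hm4
    rw [h4] at hm4
    have hKC : K ≤ Subgroup.centralizer (C : Set G4) := by
      intro k hk
      rw [Subgroup.mem_centralizer_iff]
      intro z hz
      exact (Subgroup.mem_centralizer_iff.mp hz k hk).symm
    have := Subgroup.card_le_of_le hKC
    rw [h] at this
    omega
  have hC8 : Nat.card C ≠ 8 := by
    intro h8
    have hCK : C = K := Subgroup.eq_of_le_of_card_ge hCle (by rw [h, h8])
    obtain ⟨x, hxK, hx2, hx1⟩ := exists_ord 2 (by rw [h]; norm_num)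
    have hxC : x ∈ C := hCK ▸ hxK
    have hKcx : K ≤ Subgroup.centralizer ({x} : Set G4) := by
      intro k hk
      rw [Subgroup.mem_centralizer_iff]
      rintro z rfl
      exact (Subgroup.mem_centralizer_iff.mp hxC k hk).symm
    have hge : 8 ≤ cc x := by
      have := Subgroup.card_le_of_le hKcx
      rw [h, ccEq] at this
      exact this
    have hcc8 : cc x = 8 := le_antisymm (factA x hx1) hge
    have hKeq : K = Subgroup.centralizer ({x} : Set G4) :=
      Subgroup.eq_of_le_of_card_ge hKcx (by rw [ccEq, hcc8, h])
    apply factD x hcc8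
    intro a b ha hb
    have haK : a ∈ K := by
      rw [hKeq, Subgroup.mem_centralizer_iff]
      rintro z rfl
      exact ha
    have hbK : b ∈ K := by
      rw [hKeq, Subgroup.mem_centralizer_iff]
      rintro z rfl
      exact hb
    have haC : a ∈ C := hCK ▸ haK
    exact (Subgroup.mem_centralizer_iff.mp haC b hbK).symm
  have : Nat.card C ≤ 2 := by
    obtain ⟨n, hn⟩ : ∃ n, Nat.card C = n := ⟨_, rfl⟩
    rw [hn] at hCdvd hC4 hC8 ⊢
    have hb8 : n ≤ 8 := Nat.le_of_dvd (by norm_num) hCdvd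
    interval_cases n <;> revert hCdvd hC4 hC8 <;> decide
  unfold cdMeasure
  rw [h, ← hC]
  omega

lemma m12 {K : Subgroup G4} (h : Nat.card K = 12) : cdMeasure K < 24 := by
  obtain ⟨x, hxK, hx3, hx1⟩ := exists_ord 3 (by rw [h]; norm_num)
  obtain ⟨y, hyK, hy2, hy1⟩ := exists_ord 2 (by rw [h]; norm_num)
  set C := Subgroup.centralizer (K : Set G4) with hC
  have hle : C ≤ Subgroup.centralizer ({x} : Set G4) :=
    Subgroup.centralizer_le (Set.singleton_subset_iff.mpr hxK)
  have hdvd : Nat.card C ∣ 3 := by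
    have := Subgroup.card_dvd_of_le hle
    rwa [ccEq, factB x hx3 hx1] at this
  rcases Nat.prime_three.eq_one_or_self_of_dvd _ hdvd with h1 | h3
  · unfold cdMeasure; rw [h, ← hC, h1]; omega
  · exfalso
    have hCeq : C = Subgroup.centralizer ({x} : Set G4) :=
      Subgroup.eq_of_le_of_card_ge hle (by rw [ccEq, factB x hx3 hx1, h3])
    have hxC : x ∈ C := by
      rw [hCeq, Subgroup.mem_centralizer_iff]
      rintro z rfl
      rfl
    have := Subgroup.mem_centralizer_iff.mp hxC y hyK
    have hyy : y * y = 1 := by rw [← pow_two]; exact hy2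
    exact factE x y hx3 hx1 hyy hy1 this.symm

lemma cdBot : cdMeasure (⊥ : Subgroup G4) = 24 := by
  unfold cdMeasure
  have h1 : Nat.card (⊥ : Subgroup G4) = 1 := Subgroup.card_bot
  have h2 : Subgroup.centralizer (((⊥ : Subgroup G4) : Set G4)) = ⊤ := by
    ext g
    simp only [Subgroup.mem_centralizer_iff, Subgroup.coe_bot, Subgroup.mem_top, iff_true]
    rintro z hz
    rw [Set.mem_singleton_iff.mp hz]
    simp
  rw [h1, h2, one_mul, Subgroup.card_top, cardG4]

lemma cdTop : cdMeasure (⊤ : Subgroup G4) = 24 := by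
  unfold cdMeasure
  have h2 : Subgroup.centralizer (((⊤ : Subgroup G4) : Set G4)) = ⊥ := by
    rw [Subgroup.coe_top, Subgroup.centralizer_univ, centerG4]
  rw [h2, Subgroup.card_bot, mul_one, Subgroup.card_top, cardG4]

lemma key {K : Subgroup G4} (hb : K ≠ ⊥) (ht : K ≠ ⊤) : cdMeasure K < 24 := by
  have hdvd : Nat.card K ∣ 24 := cardG4 ▸ Subgroup.card_subgroup_dvd_card K
  have hpos : 0 < Nat.card K := Nat.card_pos
  have hle : Nat.card K ≤ 24 := Nat.le_of_dvd (by norm_num) hdvd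
  have h1 : Nat.card K ≠ 1 := fun hh => hb (Subgroup.card_eq_one.mp hh)
  have h24 : Nat.card K ≠ 24 := fun hh => ht (Subgroup.eq_top_of_card_eq K (by rw [hh, cardG4]))
  obtain ⟨n, hn⟩ : ∃ n, Nat.card K = n := ⟨_, rfl⟩
  rw [hn] at hdvd hpos hle h1 h24
  have hcases : n = 2 ∨ n = 3 ∨ n = 4 ∨ n = 6 ∨ n = 8 ∨ n = 12 := by
    interval_cases n <;> revert hdvd h1 h24 <;> decide
  rcases hcases with rfl | rfl | rfl | rfl | rfl | rfl
  · exact m2 hn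
  · exact m3 hn
  · exact lt_of_le_of_lt (m4 hn) (by norm_num)
  · exact m6 hn
  · exact m8 hn
  · exact m12 hn

lemma mle24 (K : Subgroup G4) : cdMeasure K ≤ 24 := by
  rcases eq_or_ne K ⊥ with rfl | hb
  · exact cdBot.le
  rcases eq_or_ne K ⊤ with rfl | ht
  · exact cdTop.le
  exact (key hb ht).le

end CDS4Aux

theorem stmt_7 :
    CD (Equiv.Perm (Fin 4)) = {(⊥ : Subgroup (Equiv.Perm (Fin 4))), ⊤} := by
  ext H
  simp only [CD, Set.mem_setOf_eq, Set.mem_insert_iff, Set.mem_singleton_iff]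
  constructor
  · intro h
    by_contra hc
    push_neg at hc
    have h24 : 24 ≤ cdMeasure H := CDS4Aux.cdBot ▸ h ⊥
    exact absurd h24 (not_le.mpr (CDS4Aux.key hc.1 hc.2))
  · rintro (rfl | rfl) K
    · rw [CDS4Aux.cdBot]; exact CDS4Aux.mle24 K
    · rw [CDS4Aux.cdTop]; exact CDS4Aux.mle24 K
end

section
/- Let G be a finite group and U a subgroup with maximal Chermak-Delgado measure. If S is a proper subgroup of G containing U·C_G(U), then U has maximal Chermak-Delgado measure in S, i.e., U ∈ CD(S). -/
lemma centralizer_subgroupOf_eq {G : Type*} [Group G] {U S : Subgroup G} (hUS : U ≤ S) :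
    Subgroup.centralizer ((U.subgroupOf S : Subgroup S) : Set S)
      = (Subgroup.centralizer (U : Set G)).subgroupOf S := by
  ext y
  simp only [Subgroup.mem_centralizer_iff, Subgroup.mem_subgroupOf,
    Subgroup.mem_centralizer_iff]
  constructor
  · intro h g hg
    have := h ⟨g, hUS hg⟩ (by simpa [Subgroup.mem_subgroupOf] using hg)
    exact congrArg Subtype.val this
  · intro h x hx
    have := h x (by simpa [Subgroup.mem_subgroupOf] using hx)
    exact Subtype.ext this

lemma cdMeasure_le_map {G : Type*} [Group G] [Finite G] (S : Subgroup G) (K : Subgroup S) :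
    cdMeasure K ≤ cdMeasure (K.map S.subtype) := by
  have h1 : Nat.card K = Nat.card (K.map S.subtype) :=
    Nat.card_congr (Subgroup.equivMapOfInjective K S.subtype S.subtype_injective).toEquiv
  have h2 : (Subgroup.centralizer (K : Set S)).map S.subtype ≤
      Subgroup.centralizer ((K.map S.subtype : Subgroup G) : Set G) := by
    rintro g hg
    rw [Subgroup.mem_map] at hg
    obtain ⟨y, hy, rfl⟩ := hg
    rw [Subgroup.mem_centralizer_iff] at hy ⊢
    rintro h hh
    rw [SetLike.mem_coe, Subgroup.mem_map] at hh
    obtain ⟨x, hx, rfl⟩ := hh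
    exact congrArg Subtype.val (hy x hx)
  have h3 : Nat.card (Subgroup.centralizer (K : Set S)) ≤
      Nat.card (Subgroup.centralizer ((K.map S.subtype : Subgroup G) : Set G)) := by
    calc Nat.card (Subgroup.centralizer (K : Set S))
        = Nat.card ((Subgroup.centralizer (K : Set S)).map S.subtype) :=
          Nat.card_congr (Subgroup.equivMapOfInjective _ S.subtype S.subtype_injective).toEquiv
      _ ≤ _ := Subgroup.card_le_of_le h2
  rw [cdMeasure, cdMeasure, h1]
  exact Nat.mul_le_mul_left _ h3

theorem stmt_9 {G : Type*} [Group G] [Finite G] (U S : Subgroup G)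
    (hU : U ∈ CD G) (hS : S ≠ ⊤)
    (hUS : U ≤ S) (hCS : Subgroup.centralizer (U : Set G) ≤ S) :
    U.subgroupOf S ∈ CD S := by
  intro K
  have hval : cdMeasure (U.subgroupOf S) = cdMeasure U := by
    rw [cdMeasure, cdMeasure, centralizer_subgroupOf_eq hUS,
      Nat.card_congr (Subgroup.subgroupOfEquivOfLe hUS).toEquiv,
      Nat.card_congr (Subgroup.subgroupOfEquivOfLe hCS).toEquiv]
  rw [hval]
  exact (cdMeasure_le_map S K).trans (hU _)
end

section
/- For n ≥ 5, the Chermak-Delgado lattice of the symmetric group Sₙ is {1, Sₙ}. -/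
open Equiv Subgroup

section ChermakDelgado

variable {G : Type*} [Group G]

def mulCentralizerHom (H : Subgroup G) : H × centralizer (H : Set G) →* G :=
  H.subtype.noncommCoprod (centralizer (H : Set G)).subtype <| by
    intro h c
    exact mem_centralizer_iff.1 c.2 h h.2

theorem mulCentralizerHom_apply (H : Subgroup G) (p : H × centralizer (H : Set G)) :
    mulCentralizerHom H p = p.1 * p.2 :=
  rfl

theorem range_mulCentralizerHom (H : Subgroup G) :
    (mulCentralizerHom H).range = H ⊔ centralizer (H : Set G) :=
  (MonoidHom.noncommCoprod_range _ _ _).trans (by rw [range_subtype, range_subtype])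

def kerMulCentralizerHomEquiv (H : Subgroup G) :
    (mulCentralizerHom H).ker ≃ (H ⊓ centralizer (H : Set G) : Subgroup G) where
  toFun p := ⟨p.1.1, p.1.1.2, by
    have hp : (p.1.1 : G) * p.1.2 = 1 := p.2
    rw [eq_inv_of_mul_eq_one_left hp]
    exact (centralizer _).inv_mem p.1.2.2⟩
  invFun z := ⟨(⟨z, z.2.1⟩, ⟨z⁻¹, inv_mem z.2.2⟩), by simp [mulCentralizerHom_apply]⟩
  left_inv p := by
    ext
    · rfl
    · have hp : (p.1.1 : G) * p.1.2 = 1 := p.2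
      exact (eq_inv_of_mul_eq_one_right hp).symm
  right_inv _ := rfl

theorem cdMeasure_eq_card_sup_mul_card_inf (H : Subgroup G) :
    cdMeasure H = Nat.card (H ⊔ centralizer (H : Set G) : Subgroup G) *
      Nat.card (H ⊓ centralizer (H : Set G) : Subgroup G) := by
  rw [cdMeasure, ← Nat.card_prod, ← (mulCentralizerHom H).ker.card_mul_index, index_ker,
    range_mulCentralizerHom, Nat.card_congr (kerMulCentralizerHomEquiv H), mul_comm]

theorem inf_centralizer_le_centralizer (H : Subgroup G) :
    H ⊓ centralizer (H : Set G) ≤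
      centralizer ((H ⊓ centralizer (H : Set G) : Subgroup G) : Set G) :=
  inf_le_right.trans (centralizer_le inf_le_left)

theorem cdMeasure_le_cdMeasure_inf_centralizer [Finite G] (H : Subgroup G) :
    cdMeasure H ≤ cdMeasure (H ⊓ centralizer (H : Set G)) := by
  rw [cdMeasure_eq_card_sup_mul_card_inf, cdMeasure, mul_comm]
  gcongr
  exact card_le_of_le (sup_le (le_centralizer_iff.2 inf_le_right) (centralizer_le inf_le_left))

theorem cdMeasure_bot : cdMeasure (⊥ : Subgroup G) = Nat.card G := by
  rw [cdMeasure, card_bot, one_mul, centralizer_eq_top_iff_subset.2 (by simp), card_top]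

theorem card_le_cdMeasure_top [Finite G] : Nat.card G ≤ cdMeasure (⊤ : Subgroup G) := by
  rw [cdMeasure, card_top]
  exact Nat.le_mul_of_pos_right _ Nat.card_pos

theorem mem_CD_iff_cdMeasure_eq_card (hle : ∀ K : Subgroup G, cdMeasure K ≤ Nat.card G)
    {H : Subgroup G} : H ∈ CD G ↔ cdMeasure H = Nat.card G :=
  ⟨fun hH => (hle H).antisymm (cdMeasure_bot (G := G) ▸ hH ⊥), fun hH K => hH ▸ hle K⟩

theorem normal_of_sup_centralizer_eq_top {H : Subgroup G}
    (h : H ⊔ centralizer (H : Set G) = ⊤) : H.Normal := by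
  rw [← normalizer_eq_top_iff, eq_top_iff, ← h]
  exact sup_le le_normalizer (centralizer_le_normalizer _)

end ChermakDelgado

open scoped Nat

/-- The least `f` with `n ! ≤ f n` and `m * n * f (n - m) ≤ f n` for `2 ≤ m ≤ n`: the bound
produced by the orbit induction for abelian subgroups of `Sₙ`. -/
def abelianCDBound : ℕ → ℕ
  | 0 => 1
  | 1 => 1
  | 2 => 4
  | 3 => 9
  | 4 => 32
  | n + 5 => (n + 5)!

theorem abelianCDBound_eq_factorial {n : ℕ} (hn : 5 ≤ n) : abelianCDBound n = n ! := by
  obtain ⟨k, rfl⟩ := Nat.exists_eq_add_of_le' hn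
  rfl

theorem factorial_le_abelianCDBound (n : ℕ) : n ! ≤ abelianCDBound n := by
  match n with
  | 0 | 1 | 2 | 3 | 4 => decide
  | n + 5 => exact le_rfl

theorem mul_mul_abelianCDBound_lt_factorial {m j : ℕ} (hm : 2 ≤ m) (hmj : 5 ≤ m + j) :
    m * (m + j) * abelianCDBound j < (m + j)! := by
  induction m, hm using Nat.le_induction with
  | base =>
    obtain hj | hj := lt_or_ge j 5
    · obtain rfl | rfl : j = 3 ∨ j = 4 := by omega
      all_goals decide
    · rw [abelianCDBound_eq_factorial hj, show 2 + j = j + 2 by omega, Nat.factorial_succ,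
        Nat.factorial_succ]
      calc 2 * (j + 2) * j ! = (j + 2) * j ! * 2 := by ring
        _ < (j + 2) * j ! * (j + 1) := by gcongr; omega
        _ = (j + 1 + 1) * ((j + 1) * j !) := by ring
  | succ m hm ih =>
    obtain hmj' | hmj' := lt_or_ge (m + j) 5
    · obtain ⟨rfl, rfl⟩ | ⟨rfl, rfl⟩ | ⟨rfl, rfl⟩ :
          (m = 2 ∧ j = 2) ∨ (m = 3 ∧ j = 1) ∨ (m = 4 ∧ j = 0) := by omega
      all_goals decide
    · rw [show m + 1 + j = m + j + 1 by omega, Nat.factorial_succ]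
      calc (m + 1) * (m + j + 1) * abelianCDBound j
          = (m + j + 1) * ((m + 1) * abelianCDBound j) := by ring
        _ ≤ (m + j + 1) * (m * (m + j) * abelianCDBound j) := by
          gcongr
          nlinarith
        _ < (m + j + 1) * (m + j)! := by gcongr; exact ih hmj'

theorem mul_mul_abelianCDBound_le {m j : ℕ} (hm : 2 ≤ m) :
    m * (m + j) * abelianCDBound j ≤ abelianCDBound (m + j) := by
  obtain hmj | hmj := lt_or_ge (m + j) 5
  · have : j < 3 := by omega
    have : m < 5 := by omega
    interval_cases j <;> interval_cases m <;> decide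
  · rw [abelianCDBound_eq_factorial hmj]
    exact (mul_mul_abelianCDBound_lt_factorial hm hmj).le

open MulAction

section AbelianPermGroups

universe u

variable {α : Type u}

theorem apply_eq_self_of_mem_orbit {A : Subgroup (Perm α)} {g : Perm α}
    (hg : g ∈ centralizer (A : Set (Perm α))) {x y : α} (hx : g x = x) (hy : y ∈ orbit A x) :
    g y = y := by
  obtain ⟨a, rfl⟩ := hy
  calc g ((a : Perm α) x) = (g * a) x := rfl
    _ = (a * g) x := by rw [mem_centralizer_iff.1 hg a a.2]
    _ = (a : Perm α) x := by simp [Perm.mul_apply, hx]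

theorem mem_range_ofSubtype_compl_iff [Fintype α] [DecidableEq α] {s : Set α}
    [DecidablePred (· ∈ sᶜ)] {g : Perm α} :
    g ∈ (Perm.ofSubtype : Perm ↥sᶜ →* Perm α).range ↔ ∀ y ∈ s, g y = y := by
  rw [Perm.mem_range_ofSubtype_iff]
  refine ⟨fun h y hy => ?_, fun h y hy => fun hys => Perm.mem_support.1 hy (h y hys)⟩
  by_contra hgy
  exact h (Perm.mem_support.2 hgy) hy

/-- As `A` is abelian and transitive on `O = orbit A x`, the stabilisers of `x` in `A` and in
`C(A)` fix `O` pointwise, so they embed into `B = A ∩ Perm Oᶜ` and its centralizer in `Perm Oᶜ`. -/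
theorem exists_cdMeasure_le_of_orbit [Finite α] {A : Subgroup (Perm α)}
    (hA : A ≤ centralizer (A : Set (Perm α))) (x : α) :
    ∃ B : Subgroup (Perm ↥(orbit A x)ᶜ), B ≤ centralizer (B : Set (Perm ↥(orbit A x)ᶜ)) ∧
      cdMeasure A ≤ Nat.card (orbit A x) * Nat.card α * cdMeasure B := by
  classical
  have := Fintype.ofFinite α
  set ι : Perm ↥(orbit A x)ᶜ →* Perm α := Perm.ofSubtype
  have hι : Function.Injective ι := Perm.ofSubtype_injective
  have hfix {g : Perm α} (hg : g ∈ centralizer (A : Set (Perm α))) (hx : g x = x) : g ∈ ι.range :=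
    mem_range_ofSubtype_compl_iff.2 fun _ => apply_eq_self_of_mem_orbit hg hx
  set B := A.comap ι
  have hB : B ≤ centralizer (B : Set (Perm ↥(orbit A x)ᶜ)) := fun b hb =>
    mem_centralizer_iff.2 fun c hc => hι (by simpa using mem_centralizer_iff.1 (hA hb) _ hc)
  have hcardA : Nat.card A ≤ Nat.card (orbit A x) * Nat.card B := by
    rw [← (stabilizer A x).card_mul_index, index_stabilizer, Nat.card_coe_set_eq, mul_comm]
    gcongr
    calc Nat.card (stabilizer A x) = Nat.card ((stabilizer A x).map A.subtype) :=
          (card_map_of_injective A.subtype_injective).symm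
      _ ≤ Nat.card (B.map ι) := by
          refine card_le_of_le ?_
          rintro _ ⟨a, ha, rfl⟩
          rw [map_comap_eq]
          exact ⟨hfix (hA a.2) ha, a.2⟩
      _ = Nat.card B := card_map_of_injective hι
  have hcardC : Nat.card (centralizer (A : Set (Perm α))) ≤
      Nat.card α * Nat.card (centralizer (B : Set (Perm ↥(orbit A x)ᶜ))) := by
    set C := centralizer (A : Set (Perm α))
    rw [← (stabilizer C x).card_mul_index, index_stabilizer, mul_comm]
    gcongr
    · exact Set.ncard_le_card _
    calc Nat.card (stabilizer C x) = Nat.card ((stabilizer C x).map C.subtype) :=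
          (card_map_of_injective C.subtype_injective).symm
      _ ≤ Nat.card ((centralizer (B : Set (Perm ↥(orbit A x)ᶜ))).map ι) := by
          refine card_le_of_le ?_
          rintro _ ⟨c, hc, rfl⟩
          obtain ⟨c', hc'⟩ := hfix c.2 hc
          refine ⟨c', mem_centralizer_iff.2 fun b hb => hι ?_, hc'⟩
          simpa [hc'] using mem_centralizer_iff.1 c.2 (ι b) hb
      _ = Nat.card (centralizer (B : Set (Perm ↥(orbit A x)ᶜ))) := card_map_of_injective hι
  refine ⟨B, hB, ?_⟩
  calc cdMeasure A ≤ (Nat.card (orbit A x) * Nat.card B) *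
        (Nat.card α * Nat.card (centralizer (B : Set (Perm ↥(orbit A x)ᶜ)))) :=
        Nat.mul_le_mul hcardA hcardC
    _ = Nat.card (orbit A x) * Nat.card α * cdMeasure B := by rw [cdMeasure]; ring

theorem exists_two_le_card_orbit [Finite α] {A : Subgroup (Perm α)} (hA : A ≠ ⊥) :
    ∃ x : α, 2 ≤ Nat.card (orbit A x) := by
  obtain ⟨a, ha1⟩ := (Subgroup.ne_bot_iff_exists_ne_one).1 hA
  obtain ⟨x, hx⟩ : ∃ x, (a : Perm α) x ≠ x := by
    by_contra! h
    exact ha1 (Subtype.ext (Perm.ext h))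
  refine ⟨x, (Set.one_lt_ncard (Set.toFinite _)).2 ⟨_, mem_orbit x a, x, mem_orbit_self x, hx⟩⟩

theorem exists_cdMeasure_le_of_ne_bot [Finite α] {A : Subgroup (Perm α)}
    (hA : A ≤ centralizer (A : Set (Perm α))) (hbot : A ≠ ⊥)
    (hbound : ∀ (β : Type u) [Finite β], Nat.card β < Nat.card α → ∀ B : Subgroup (Perm β),
      B ≤ centralizer (B : Set (Perm β)) → cdMeasure B ≤ abelianCDBound (Nat.card β)) :
    ∃ m j, 2 ≤ m ∧ m + j = Nat.card α ∧ cdMeasure A ≤ m * (m + j) * abelianCDBound j := by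
  obtain ⟨x, hx⟩ := exists_two_le_card_orbit hbot
  obtain ⟨B, hB, hAB⟩ := exists_cdMeasure_le_of_orbit hA x
  have hcard : Nat.card (orbit A x) + Nat.card ↥(orbit A x)ᶜ = Nat.card α := by
    simp only [Nat.card_coe_set_eq]
    exact Set.ncard_add_ncard_compl _
  refine ⟨_, _, hx, hcard, hAB.trans ?_⟩
  rw [hcard]
  gcongr
  exact hbound _ (by omega) B hB

theorem cdMeasure_le_abelianCDBound [Finite α] {A : Subgroup (Perm α)}
    (hA : A ≤ centralizer (A : Set (Perm α))) : cdMeasure A ≤ abelianCDBound (Nat.card α) := by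
  induction h : Nat.card α using Nat.strong_induction_on generalizing α with
  | _ n ih =>
  obtain rfl | hbot := eq_or_ne A ⊥
  · rw [cdMeasure_bot, Nat.card_perm, h]
    exact factorial_le_abelianCDBound n
  · obtain ⟨m, j, hm, hmj, hAB⟩ := exists_cdMeasure_le_of_ne_bot hA hbot
      fun β _ hβ B hB => ih _ (h ▸ hβ) hB rfl
    rw [← h, ← hmj]
    exact hAB.trans (mul_mul_abelianCDBound_le hm)

theorem cdMeasure_lt_factorial [Finite α] {A : Subgroup (Perm α)}
    (hA : A ≤ centralizer (A : Set (Perm α))) (hbot : A ≠ ⊥) (h5 : 5 ≤ Nat.card α) :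
    cdMeasure A < (Nat.card α)! := by
  obtain ⟨m, j, hm, hmj, hAB⟩ :=
    exists_cdMeasure_le_of_ne_bot hA hbot fun β _ _ B hB => cdMeasure_le_abelianCDBound hB
  rw [← hmj] at h5 ⊢
  exact hAB.trans_lt (mul_mul_abelianCDBound_lt_factorial hm h5)

theorem cdMeasure_le_card_perm [Finite α] (h5 : 5 ≤ Nat.card α) (K : Subgroup (Perm α)) :
    cdMeasure K ≤ Nat.card (Perm α) := by
  rw [Nat.card_perm, ← abelianCDBound_eq_factorial h5]
  exact (cdMeasure_le_cdMeasure_inf_centralizer K).trans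
    (cdMeasure_le_abelianCDBound (inf_centralizer_le_centralizer K))

end AbelianPermGroups

section SymmetricGroup

variable {α : Type*} [Fintype α] [DecidableEq α]

theorem Equiv.Perm.eq_bot_or_eq_bot_of_inf_eq_bot (h5 : 5 ≤ Nat.card α)
    {N M : Subgroup (Perm α)} [N.Normal] [M.Normal] (h : N ⊓ M = ⊥) : N = ⊥ ∨ M = ⊥ := by
  by_contra! hNM
  have hle : alternatingGroup α ≤ N ⊓ M :=
    le_inf (Perm.alternatingGroup_le_of_normal h5 ((nontrivial_iff_ne_bot N).2 hNM.1))
      (Perm.alternatingGroup_le_of_normal h5 ((nontrivial_iff_ne_bot M).2 hNM.2))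
  have := alternatingGroup.nontrivial_of_three_le_card (α := α) (by omega)
  exact (nontrivial_iff_ne_bot _).1 this (eq_bot_iff.2 (h ▸ hle))

theorem eq_bot_or_eq_top_of_cdMeasure_eq_card (h5 : 5 ≤ Nat.card α) {H : Subgroup (Perm α)}
    (hH : cdMeasure H = Nat.card (Perm α)) : H = ⊥ ∨ H = ⊤ := by
  have hZ : H ⊓ centralizer (H : Set (Perm α)) = ⊥ := by
    by_contra hZ
    have := cdMeasure_lt_factorial (inf_centralizer_le_centralizer H) hZ h5
    have := cdMeasure_le_cdMeasure_inf_centralizer H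
    rw [hH, Nat.card_perm] at this
    omega
  have hsup : H ⊔ centralizer (H : Set (Perm α)) = ⊤ := by
    refine eq_top_of_card_eq _ ?_
    rw [← hH, cdMeasure_eq_card_sup_mul_card_inf, hZ, card_bot, mul_one]
  have := normal_of_sup_centralizer_eq_top hsup
  refine (Perm.eq_bot_or_eq_bot_of_inf_eq_bot h5 hZ).imp id fun hC => ?_
  rwa [hC, sup_bot_eq] at hsup

theorem CD_perm (h5 : 5 ≤ Nat.card α) : CD (Perm α) = {⊥, ⊤} := by
  ext H
  rw [Set.mem_insert_iff, Set.mem_singleton_iff,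
    mem_CD_iff_cdMeasure_eq_card (cdMeasure_le_card_perm h5)]
  refine ⟨eq_bot_or_eq_top_of_cdMeasure_eq_card h5, ?_⟩
  rintro (rfl | rfl)
  · exact cdMeasure_bot
  · exact (cdMeasure_le_card_perm h5 ⊤).antisymm card_le_cdMeasure_top

end SymmetricGroup

theorem stmt_12 (n : ℕ) (hn : 5 ≤ n) :
    CD (Equiv.Perm (Fin n)) = {(⊥ : Subgroup (Equiv.Perm (Fin n))), ⊤} :=
  CD_perm (by simpa using hn)
end

section
/- For any subgroup U of a direct product G × H of finite groups, m_{G×H}(U) ≤ m_G(π_G(U)) · m_H(π_H(U)), with equality if and only if U = π_G(U) × π_H(U). -/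
lemma card_prod_aux {G H : Type*} [Group G] [Group H] (A : Subgroup G) (B : Subgroup H) :
    Nat.card (A.prod B) = Nat.card A * Nat.card B := by
  rw [Nat.card_congr (A.prodEquiv B).toEquiv, Nat.card_prod]

lemma cent_eq_aux {G H : Type*} [Group G] [Group H] (U : Subgroup (G × H)) :
    Subgroup.centralizer (U : Set (G × H)) =
      (Subgroup.centralizer ((U.map (MonoidHom.fst G H)) : Set G)).prod
        (Subgroup.centralizer ((U.map (MonoidHom.snd G H)) : Set H)) := by
  ext ⟨g, h⟩
  simp only [Subgroup.mem_centralizer_iff, Subgroup.mem_prod, Subgroup.coe_map,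
    Set.mem_image, SetLike.mem_coe]
  constructor
  · intro hc
    constructor
    · rintro a ⟨⟨x, y⟩, hxy, rfl⟩
      exact congrArg Prod.fst (hc (x, y) hxy)
    · rintro b ⟨⟨x, y⟩, hxy, rfl⟩
      exact congrArg Prod.snd (hc (x, y) hxy)
  · rintro ⟨h1, h2⟩ ⟨x, y⟩ hxy
    exact Prod.ext (h1 x ⟨(x, y), hxy, rfl⟩) (h2 y ⟨(x, y), hxy, rfl⟩)

theorem stmt_14 {G H : Type*} [Group G] [Group H] [Finite G] [Finite H]
    (U : Subgroup (G × H)) :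
    cdMeasure U ≤
      cdMeasure (U.map (MonoidHom.fst G H)) * cdMeasure (U.map (MonoidHom.snd G H)) ∧
    (cdMeasure U =
        cdMeasure (U.map (MonoidHom.fst G H)) * cdMeasure (U.map (MonoidHom.snd G H)) ↔
      U = (U.map (MonoidHom.fst G H)).prod (U.map (MonoidHom.snd G H))) := by
  set A := U.map (MonoidHom.fst G H) with hA
  set B := U.map (MonoidHom.snd G H) with hB
  have hle : U ≤ A.prod B := Subgroup.le_prod_iff.mpr ⟨le_rfl, le_rfl⟩
  have hcU : Nat.card (Subgroup.centralizer (U : Set (G × H)))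
      = Nat.card (Subgroup.centralizer (A : Set G)) *
        Nat.card (Subgroup.centralizer (B : Set H)) := by
    rw [cent_eq_aux U, card_prod_aux]
  have hUle : Nat.card U ≤ Nat.card A * Nat.card B := by
    rw [← card_prod_aux]; exact Subgroup.card_le_of_le hle
  have cApos : 0 < Nat.card (Subgroup.centralizer (A : Set G)) := Nat.card_pos
  have cBpos : 0 < Nat.card (Subgroup.centralizer (B : Set H)) := Nat.card_pos
  have key : cdMeasure U = Nat.card U *
      (Nat.card (Subgroup.centralizer (A : Set G)) *
       Nat.card (Subgroup.centralizer (B : Set H))) := by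
    rw [cdMeasure, hcU]
  have rhs : cdMeasure A * cdMeasure B = (Nat.card A * Nat.card B) *
      (Nat.card (Subgroup.centralizer (A : Set G)) *
       Nat.card (Subgroup.centralizer (B : Set H))) := by
    rw [cdMeasure, cdMeasure]; ring
  constructor
  · rw [key, rhs]
    exact Nat.mul_le_mul_right _ hUle
  · rw [key, rhs, Nat.mul_right_cancel_iff (Nat.mul_pos cApos cBpos)]
    constructor
    · intro hcard
      refine Subgroup.eq_of_le_of_card_ge hle ?_
      rw [card_prod_aux]
      omega
    · intro hU
      rw [← card_prod_aux, ← hU]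
end

section
/- For finite groups G and H, the Chermak-Delgado lattice of G × H equals the set of subgroups of the form X × Y with X ∈ CD(G) and Y ∈ CD(H); i.e., CD(G × H) = CD(G) × CD(H). -/
section Aux

variable {G H : Type*} [Group G] [Group H]

lemma centralizer_subgroup_eq_prod (U : Subgroup (G × H)) :
    Subgroup.centralizer (U : Set (G × H)) =
      (Subgroup.centralizer ((U.map (MonoidHom.fst G H) : Subgroup G) : Set G)).prod
        (Subgroup.centralizer ((U.map (MonoidHom.snd G H) : Subgroup H) : Set H)) := by
  ext ⟨g, h⟩
  simp only [Subgroup.mem_centralizer_iff, Subgroup.mem_prod, SetLike.mem_coe,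
    Subgroup.mem_map, MonoidHom.coe_fst, MonoidHom.coe_snd]
  constructor
  · intro hc
    refine ⟨fun a ⟨⟨x, y⟩, hxy, hx⟩ => ?_, fun b ⟨⟨x, y⟩, hxy, hy⟩ => ?_⟩
    · have := hc (x, y) hxy
      subst hx
      exact congrArg Prod.fst this
    · have := hc (x, y) hxy
      subst hy
      exact congrArg Prod.snd this
  · rintro ⟨h1, h2⟩ ⟨x, y⟩ hxy
    have hx : x * g = g * x := h1 x ⟨(x, y), hxy, rfl⟩
    have hy : y * h = h * y := h2 y ⟨(x, y), hxy, rfl⟩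
    exact Prod.ext hx hy

lemma card_prod_subgroup (X : Subgroup G) (Y : Subgroup H) :
    Nat.card (X.prod Y) = Nat.card X * Nat.card Y := by
  rw [Nat.card_congr (Subgroup.prodEquiv X Y).toEquiv, Nat.card_prod]

lemma map_fst_prod (X : Subgroup G) (Y : Subgroup H) :
    (X.prod Y).map (MonoidHom.fst G H) = X := by
  ext g
  simp only [Subgroup.mem_map, Subgroup.mem_prod, MonoidHom.coe_fst]
  constructor
  · rintro ⟨⟨a, b⟩, ⟨ha, hb⟩, rfl⟩; exact ha
  · intro hg; exact ⟨(g, 1), ⟨hg, Y.one_mem⟩, rfl⟩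

lemma map_snd_prod (X : Subgroup G) (Y : Subgroup H) :
    (X.prod Y).map (MonoidHom.snd G H) = Y := by
  ext h
  simp only [Subgroup.mem_map, Subgroup.mem_prod, MonoidHom.coe_snd]
  constructor
  · rintro ⟨⟨a, b⟩, ⟨ha, hb⟩, rfl⟩; exact hb
  · intro hh; exact ⟨(1, h), ⟨X.one_mem, hh⟩, rfl⟩

lemma cdMeasure_prod (X : Subgroup G) (Y : Subgroup H) :
    cdMeasure (X.prod Y) = cdMeasure X * cdMeasure Y := by
  unfold cdMeasure
  rw [card_prod_subgroup, centralizer_subgroup_eq_prod, map_fst_prod, map_snd_prod,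
    card_prod_subgroup]
  ring

lemma le_prod_map (U : Subgroup (G × H)) :
    U ≤ (U.map (MonoidHom.fst G H)).prod (U.map (MonoidHom.snd G H)) := by
  rintro ⟨a, b⟩ hab
  exact ⟨⟨(a, b), hab, rfl⟩, ⟨(a, b), hab, rfl⟩⟩

lemma cdMeasure_pos {G : Type*} [Group G] [Finite G] (K : Subgroup G) : 0 < cdMeasure K := by
  unfold cdMeasure
  exact Nat.mul_pos Nat.card_pos Nat.card_pos

end Aux

theorem stmt_15 {G H : Type*} [Group G] [Group H] [Finite G] [Finite H] :
    CD (G × H) = {U : Subgroup (G × H) | ∃ X ∈ CD G, ∃ Y ∈ CD H, U = X.prod Y} := by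
  -- pick maximizers
  obtain ⟨X₀, hX₀⟩ := Finite.exists_max (fun X : Subgroup G => cdMeasure X)
  obtain ⟨Y₀, hY₀⟩ := Finite.exists_max (fun Y : Subgroup H => cdMeasure Y)
  have hX₀CD : X₀ ∈ CD G := hX₀
  have hY₀CD : Y₀ ∈ CD H := hY₀
  -- measure of U bounded by measure of product of projections
  have key : ∀ U : Subgroup (G × H),
      cdMeasure U ≤ cdMeasure ((U.map (MonoidHom.fst G H)).prod (U.map (MonoidHom.snd G H))) := by
    intro U
    unfold cdMeasure
    rw [centralizer_subgroup_eq_prod U,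
      centralizer_subgroup_eq_prod ((U.map (MonoidHom.fst G H)).prod (U.map (MonoidHom.snd G H))),
      map_fst_prod, map_snd_prod]
    exact Nat.mul_le_mul_right _ (Subgroup.card_le_of_le (le_prod_map U))
  ext U
  simp only [Set.mem_setOf_eq]
  constructor
  · intro hU
    set X := U.map (MonoidHom.fst G H) with hXdef
    set Y := U.map (MonoidHom.snd G H) with hYdef
    -- U = X.prod Y since cards agree
    have h1 : cdMeasure (X.prod Y) ≤ cdMeasure U := hU _
    have h2 : cdMeasure U ≤ cdMeasure (X.prod Y) := key U
    have hcent : Subgroup.centralizer (U : Set (G × H)) =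
        Subgroup.centralizer ((X.prod Y : Subgroup (G × H)) : Set (G × H)) := by
      rw [centralizer_subgroup_eq_prod U, centralizer_subgroup_eq_prod (X.prod Y),
        map_fst_prod, map_snd_prod]
    have hcard : Nat.card U = Nat.card (X.prod Y) := by
      have hm : cdMeasure U = cdMeasure (X.prod Y) := le_antisymm h2 h1
      unfold cdMeasure at hm
      rw [hcent] at hm
      exact Nat.eq_of_mul_eq_mul_right Nat.card_pos hm
    have hUeq : U = X.prod Y := by
      have hle := le_prod_map U
      have : (U : Set (G × H)) = ((X.prod Y : Subgroup (G × H)) : Set (G × H)) := by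
        apply Set.eq_of_subset_of_ncard_le hle
        rw [← Nat.card_coe_set_eq, ← Nat.card_coe_set_eq]
        simp only [SetLike.coe_sort_coe]
        exact hcard.ge
      exact SetLike.coe_injective this
    -- X and Y are maximizers
    have hprod : cdMeasure X * cdMeasure Y = cdMeasure X₀ * cdMeasure Y₀ := by
      have hge : cdMeasure (X₀.prod Y₀) ≤ cdMeasure U := hU _
      have hle : cdMeasure U ≤ cdMeasure (X₀.prod Y₀) := by
        rw [hUeq, cdMeasure_prod, cdMeasure_prod]
        exact Nat.mul_le_mul (hX₀ X) (hY₀ Y)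
      have : cdMeasure U = cdMeasure (X₀.prod Y₀) := le_antisymm hle hge
      rw [hUeq, cdMeasure_prod] at this
      rw [this, cdMeasure_prod]
    have hXmax : cdMeasure X = cdMeasure X₀ := by
      have hx := hX₀ X
      have hy := hY₀ Y
      have px := cdMeasure_pos X
      have py := cdMeasure_pos Y
      have px0 := cdMeasure_pos X₀
      have py0 := cdMeasure_pos Y₀
      nlinarith
    have hYmax : cdMeasure Y = cdMeasure Y₀ := by
      have hx := hX₀ X
      have hy := hY₀ Y
      have px := cdMeasure_pos X
      have py := cdMeasure_pos Y
      have px0 := cdMeasure_pos X₀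
      have py0 := cdMeasure_pos Y₀
      nlinarith
    exact ⟨X, fun K => hXmax ▸ hX₀ K, Y, fun K => hYmax ▸ hY₀ K, hUeq⟩
  · rintro ⟨X, hX, Y, hY, rfl⟩
    intro K
    calc cdMeasure K
        ≤ cdMeasure ((K.map (MonoidHom.fst G H)).prod (K.map (MonoidHom.snd G H))) := key K
      _ = cdMeasure (K.map (MonoidHom.fst G H)) * cdMeasure (K.map (MonoidHom.snd G H)) :=
          cdMeasure_prod _ _
      _ ≤ cdMeasure X * cdMeasure Y := Nat.mul_le_mul (hX _) (hY _)
      _ = cdMeasure (X.prod Y) := (cdMeasure_prod X Y).symm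
end

section
/- Let G be a nontrivial finite group and W = G ≀ Cₙ the wreath product with the cyclic group of order n acting by cyclic permutation on {1,...,n}, with base group B = Gⁿ. If an element fσ ∈ W \ B (with f ∈ B and σ a generator of Cₙ) commutes with b ∈ B, then b(i) = b(1)^{f(1)f(2)⋯f(i−1)} for 1 < i ≤ n, and b(1) centralizes f(1)f(2)⋯f(n) in G. -/
/-- The automorphism of the base group `ZMod n → G` shifting coordinates by `k`. -/
def shiftAut (n : ℕ) (G : Type*) [Group G] (k : ZMod n) : MulAut (ZMod n → G) where
  toFun f := fun ω => f (ω + k)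
  invFun f := fun ω => f (ω - k)
  left_inv f := by funext ω; simp
  right_inv f := by funext ω; simp
  map_mul' f g := rfl

/-- The shift action of the cyclic group `Cₙ` on the base group `ZMod n → G`. -/
def shiftHom (n : ℕ) (G : Type*) [Group G] :
    Multiplicative (ZMod n) →* MulAut (ZMod n → G) where
  toFun k := shiftAut n G (Multiplicative.toAdd k)
  map_one' := by
    ext f ω
    simp [shiftAut]
  map_mul' a b := by
    ext f ω
    show f _ = f _
    congr 1
    simp [toAdd_mul, add_assoc]

/-- The wreath product `G ≀ Cₙ`, with `Cₙ` cyclically permuting the `n` copies of `G`. -/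
abbrev Wreath (n : ℕ) (G : Type*) [Group G] :=
  SemidirectProduct (ZMod n → G) (Multiplicative (ZMod n)) (shiftHom n G)

/-- The base group `B = Gⁿ` of the wreath product `G ≀ Cₙ`. -/
def baseSubgroup (n : ℕ) (G : Type*) [Group G] : Subgroup (Wreath n G) :=
  (SemidirectProduct.inl : (ZMod n → G) →* Wreath n G).range

theorem SemidirectProduct.commute_mk_inl_iff {N H : Type*} [Group N] [Group H]
    {φ : H →* MulAut N} (a b : N) (h : H) :
    Commute (⟨a, h⟩ : N ⋊[φ] H) (SemidirectProduct.inl b) ↔ a * φ h b = b * a := by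
  simp [Commute, SemiconjBy, SemidirectProduct.ext_iff]

theorem Wreath.commute_mk_inl_iff {n : ℕ} {G : Type*} [Group G] (f b : ZMod n → G)
    (k : ZMod n) :
    Commute (⟨f, Multiplicative.ofAdd k⟩ : Wreath n G) (SemidirectProduct.inl b) ↔
      ∀ ω, f ω * b (ω + k) = b ω * f ω := by
  rw [SemidirectProduct.commute_mk_inl_iff, funext_iff]
  rfl

theorem eq_inv_prod_mul_mul_prod_of_mul_succ {G : Type*} [Group G] {f b : ℕ → G}
    (h : ∀ i, f i * b (i + 1) = b i * f i) (i : ℕ) :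
    b i = ((List.range i).map f).prod⁻¹ * b 0 * ((List.range i).map f).prod := by
  induction i with
  | zero => simp
  | succ i ih =>
    have hstep : b (i + 1) = (f i)⁻¹ * b i * f i := by
      rw [mul_assoc, ← h, inv_mul_cancel_left]
    simp only [hstep, ih, List.range_succ, List.map_append, List.prod_append, List.map_cons,
      List.map_nil, List.prod_cons, List.prod_nil, mul_one, mul_inv_rev, mul_assoc]

theorem stmt_16_general {G : Type*} [Group G] (n : ℕ)
    (f b : ZMod n → G)
    (hcomm : (⟨f, Multiplicative.ofAdd (1 : ZMod n)⟩ : Wreath n G) * SemidirectProduct.inl b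
      = SemidirectProduct.inl b * ⟨f, Multiplicative.ofAdd (1 : ZMod n)⟩) :
    (∀ i : ℕ, 0 < i → i < n →
      b (i : ZMod n) =
        (((List.range i).map (fun j => f (j : ZMod n))).prod)⁻¹ * b 0 *
          ((List.range i).map (fun j => f (j : ZMod n))).prod) ∧
    Commute (b 0) ((List.range n).map (fun j => f (j : ZMod n))).prod := by
  -- `(List.range i).map (fun j => f (j : ZMod n))` elaborates with `List.range i` coerced to a
  -- `List (ZMod n)` through the list monad; normalize it to `(List.range i).map (f ∘ Nat.cast)`.
  simp only [List.pure_def, List.bind_eq_flatMap, ← List.map_eq_flatMap, List.map_map]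
  have hshift : ∀ i : ℕ, f i * b ((i + 1 : ℕ) : ZMod n) = b i * f i := fun i => by
    rw [Nat.cast_succ]
    exact (Wreath.commute_mk_inl_iff f b 1).mp hcomm i
  have hconj := eq_inv_prod_mul_mul_prod_of_mul_succ (f := f ∘ Nat.cast) (b := b ∘ Nat.cast) hshift
  simp only [Function.comp_apply, Nat.cast_zero] at hconj
  refine ⟨fun i _ _ => hconj i, ?_⟩
  have hcycle := hconj n
  rw [ZMod.natCast_self, mul_assoc, eq_inv_mul_iff_mul_eq] at hcycle
  exact hcycle.symm

theorem stmt_16 {G : Type*} [Group G] [Finite G] [Nontrivial G] (n : ℕ) (hn : 0 < n)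
    (f b : ZMod n → G)
    (hout : (⟨f, Multiplicative.ofAdd (1 : ZMod n)⟩ : Wreath n G) ∉ baseSubgroup n G)
    (hcomm : (⟨f, Multiplicative.ofAdd (1 : ZMod n)⟩ : Wreath n G) * SemidirectProduct.inl b
      = SemidirectProduct.inl b * ⟨f, Multiplicative.ofAdd (1 : ZMod n)⟩) :
    (∀ i : ℕ, 0 < i → i < n →
      b (i : ZMod n) =
        (((List.range i).map (fun j => f (j : ZMod n))).prod)⁻¹ * b 0 *
          ((List.range i).map (fun j => f (j : ZMod n))).prod) ∧
    Commute (b 0) ((List.range n).map (fun j => f (j : ZMod n))).prod :=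
  stmt_16_general n f b hcomm
end

section
/- Let G be a nontrivial finite group and W = G ≀ Cₙ for an integer n ≥ 2. If |Z(G)| ≥ 2 and (|Z(G)| > 2 or n > 2), then W does not achieve the maximal Chermak-Delgado measure among subgroups of W, i.e., W ∉ CD(W). -/
/-!
Compare `W` with its base group `B = Gⁿ`. The centralizer of `B` contains `Z(G)ⁿ`, so
`m(B) ≥ |G|ⁿ |Z(G)|ⁿ`. A central element of `W` commutes with the base elements supported at a
single coordinate, which forces it into `B` with central coordinates, and with the shifts, which
forces it to be constant; hence `|Z(W)| ≤ |Z(G)|` and `m(W) ≤ n |G|ⁿ |Z(G)|`. Finally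
`n z < zⁿ` for `z, n ≥ 2` not both equal to `2`.
-/

lemma Nat.mul_lt_pow_of_two_le {z n : ℕ} (hz : 2 ≤ z) (hn : 2 ≤ n) (h : 2 < z ∨ 2 < n) :
    n * z < z ^ n := by
  obtain ⟨m, rfl⟩ := Nat.exists_eq_add_of_le hn
  have hm : m < z ^ m := Nat.lt_pow_self (by omega)
  have hlin : 2 + m < z * (m + 1) := by rcases h with h | h <;> nlinarith
  calc (2 + m) * z < z * (m + 1) * z := Nat.mul_lt_mul_of_pos_right hlin (by omega)
    _ = z ^ 2 * (m + 1) := by ring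
    _ ≤ z ^ 2 * z ^ m := Nat.mul_le_mul_left _ hm
    _ = z ^ (2 + m) := (pow_add z 2 m).symm

instance SemidirectProduct.instFinite {N H : Type*} [Group N] [Group H] {φ : H →* MulAut N}
    [Finite N] [Finite H] : Finite (N ⋊[φ] H) :=
  Finite.of_equiv _ SemidirectProduct.equivProd.symm

theorem Subgroup.map_center_le_centralizer_range {G H : Type*} [Group G] [Group H] (f : G →* H) :
    (center G).map f ≤ centralizer (f.range : Set H) := by
  rintro _ ⟨c, hc, rfl⟩
  rw [mem_centralizer_iff]
  rintro _ ⟨x, rfl⟩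
  rw [← map_mul, ← map_mul, mem_center_iff.mp hc x]

theorem cdMeasure_top (G : Type*) [Group G] :
    cdMeasure (⊤ : Subgroup G) = Nat.card G * Nat.card (Subgroup.center G) := by
  rw [cdMeasure, Subgroup.coe_top, Subgroup.centralizer_univ, Subgroup.card_top]

@[simp]
theorem shiftHom_apply {n : ℕ} {G : Type*} [Group G] (k : Multiplicative (ZMod n))
    (f : ZMod n → G) (ω : ZMod n) : shiftHom n G k f ω = f (ω + Multiplicative.toAdd k) :=
  rfl

namespace Wreath

variable {n : ℕ} {G : Type*} [Group G]

theorem right_eq_one_of_mem_center [Nontrivial G] {w : Wreath n G}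
    (hw : w ∈ Subgroup.center (Wreath n G)) : w.right = 1 := by
  by_contra hr
  obtain ⟨a, ha⟩ := exists_ne (1 : G)
  have hk : Multiplicative.toAdd w.right ≠ 0 := by simpa using hr
  have := congrFun (congrArg SemidirectProduct.left
    ((Subgroup.mem_center_iff.mp hw) (SemidirectProduct.inl (Pi.mulSingle 0 a)))) 0
  exact ha (by simpa [SemidirectProduct.mul_left, Pi.mulSingle_eq_of_ne hk] using this)

theorem left_mem_center_of_mem_center [Nontrivial G] {w : Wreath n G}
    (hw : w ∈ Subgroup.center (Wreath n G)) (ω : ZMod n) : w.left ω ∈ Subgroup.center G := by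
  rw [Subgroup.mem_center_iff]
  intro a
  have := congrFun (congrArg SemidirectProduct.left
    ((Subgroup.mem_center_iff.mp hw) (SemidirectProduct.inl (Pi.mulSingle ω a)))) ω
  simpa [SemidirectProduct.mul_left, right_eq_one_of_mem_center hw] using this

theorem left_eq_left_zero_of_mem_center {w : Wreath n G}
    (hw : w ∈ Subgroup.center (Wreath n G)) (ω : ZMod n) : w.left ω = w.left 0 := by
  have := congrFun (congrArg SemidirectProduct.left
    ((Subgroup.mem_center_iff.mp hw) (SemidirectProduct.inr (Multiplicative.ofAdd ω)))) 0
  simpa [SemidirectProduct.mul_left] using this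

theorem center_le_map_center [Nontrivial G] :
    Subgroup.center (Wreath n G) ≤
      (Subgroup.center G).map (SemidirectProduct.inl.comp (Pi.constMonoidHom (ZMod n) G)) := by
  intro w hw
  refine ⟨w.left 0, left_mem_center_of_mem_center hw 0, ?_⟩
  ext ω
  · exact (left_eq_left_zero_of_mem_center hw ω).symm
  · exact (right_eq_one_of_mem_center hw).symm

theorem card_center_le [NeZero n] [Finite G] [Nontrivial G] :
    Nat.card (Subgroup.center (Wreath n G)) ≤ Nat.card (Subgroup.center G) :=
  (Subgroup.card_le_of_le center_le_map_center).trans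
    (Nat.le_of_dvd Nat.card_pos (Subgroup.card_map_dvd _ _))

theorem card [NeZero n] : Nat.card (Wreath n G) = Nat.card G ^ n * n := by
  rw [SemidirectProduct.card, Nat.card_fun, Nat.card_congr Multiplicative.toAdd, Nat.card_zmod]

theorem card_baseSubgroup [NeZero n] : Nat.card (baseSubgroup n G) = Nat.card G ^ n := by
  rw [baseSubgroup, ← Nat.card_congr (MonoidHom.ofInjective
    (SemidirectProduct.inl_injective (φ := shiftHom n G))).toEquiv, Nat.card_fun, Nat.card_zmod]

theorem pow_card_center_le_card_centralizer_baseSubgroup [NeZero n] [Finite G] :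
    Nat.card (Subgroup.center G) ^ n ≤
      Nat.card (Subgroup.centralizer (baseSubgroup n G : Set (Wreath n G))) := by
  calc Nat.card (Subgroup.center G) ^ n
      = Nat.card (ZMod n → Subgroup.center G) := by rw [Nat.card_fun, Nat.card_zmod]
    _ = Nat.card (Subgroup.center (ZMod n → G)) := by
        rw [Subgroup.center_pi]
        exact Nat.card_congr (Equiv.Set.univPi _).symm
    _ = Nat.card ((Subgroup.center (ZMod n → G)).map SemidirectProduct.inl) :=
        (Subgroup.card_map_of_injective SemidirectProduct.inl_injective).symm
    _ ≤ _ := Subgroup.card_le_of_le (Subgroup.map_center_le_centralizer_range _)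

end Wreath

theorem stmt_19 {G : Type*} [Group G] [Finite G] [Nontrivial G] (n : ℕ) (hn : 2 ≤ n)
    (hz : 2 ≤ Nat.card (Subgroup.center G))
    (h : 2 < Nat.card (Subgroup.center G) ∨ 2 < n) :
    (⊤ : Subgroup (Wreath n G)) ∉ CD (Wreath n G) := by
  have : NeZero n := ⟨by omega⟩
  intro hCD
  have hbase : Nat.card G ^ n * Nat.card (Subgroup.center G) ^ n ≤
      cdMeasure (baseSubgroup n G) := by
    rw [cdMeasure, Wreath.card_baseSubgroup]
    exact Nat.mul_le_mul_left _ Wreath.pow_card_center_le_card_centralizer_baseSubgroup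
  have htop : cdMeasure (⊤ : Subgroup (Wreath n G)) ≤
      Nat.card G ^ n * (n * Nat.card (Subgroup.center G)) := by
    rw [cdMeasure_top, Wreath.card, mul_assoc]
    exact Nat.mul_le_mul_left _ (Nat.mul_le_mul_left _ Wreath.card_center_le)
  have hlt := Nat.mul_lt_mul_of_pos_left (Nat.mul_lt_pow_of_two_le hz hn h)
    (Nat.pow_pos (n := n) (Nat.card_pos (α := G)))
  exact (hCD (baseSubgroup n G)).not_gt (htop.trans_lt (hlt.trans_le hbase))
end
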